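/- arXiv:1912.01090 — 3 statements merged into one kernel-verified Lean document; each statement's English description precedes it below -/
import Mathlib

section
/- For natural numbers n ≥ k ≥ 1, the quantity σ(k) - σ(n) + #([n] ∩ [n-k]) is non-negative; equivalently #([n] ∩ [n-k]) ≥ σ(n) - σ(k). -/
/-- Stirling numbers of the second kind. -/
def stirling2 : ℕ → ℕ → ℕ
  | 0, 0 => 1
  | 0, _ + 1 => 0
  | _ + 1, 0 => 0
  | n + 1, k + 1 => (k + 1) * stirling2 n (k + 1) + stirling2 n k

/-- Sum of base-2 digits. -/
def sigma2 (n : ℕ) : ℕ := (Nat.digits 2 n).sum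

/-- The set of powers of 2 appearing in the binary expansion of `n`. -/
def twoPows (n : ℕ) : Finset ℕ := (Nat.bitIndices n).toFinset.image (2 ^ ·)

/-!
Write `n = m + k` and count the bits of `n` that are not bits of `m`. Adding `1` switches on at
most one new bit (the lowest zero bit), and adding `2 * k` to `m` acts on the bits of `m` above
the lowest one as adding `k` to `m / 2`. By binary induction on `k`, the number of new bits is
therefore at most `σ(k)`. Since `σ(n) = #([n] \ [m]) + #([n] ∩ [m])`, this is the claim with
`m = n - k`.
-/

open Finset Nat

theorem Finset.card_sdiff_le_card_sdiff_add_card_sdiff {α : Type*} [DecidableEq α]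
    (s t u : Finset α) : #(s \ u) ≤ #(s \ t) + #(t \ u) :=
  (card_le_card (sdiff_triangle s t u)).trans (card_union_le _ _)

def bitSet (n : ℕ) : Finset ℕ := n.bitIndices.toFinset

@[simp] theorem mem_bitSet {i n : ℕ} : i ∈ bitSet n ↔ n.testBit i := by
  simp [bitSet]

@[simp] theorem bitSet_zero : bitSet 0 = ∅ := by
  simp [bitSet]

theorem bitSet_bit_sdiff_bitSet_bit (b b' : Bool) (m n : ℕ) :
    bitSet (bit b' n) \ bitSet (bit b m) =
      (if b' && !b then {0} else ∅) ∪ (bitSet n \ bitSet m).map (addRightEmbedding 1) := by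
  ext i
  cases i with
  | zero => cases b <;> cases b' <;> simp
  | succ i =>
    rw [mem_sdiff, mem_bitSet, mem_bitSet, testBit_bit_succ, testBit_bit_succ]
    split <;> simp

theorem card_bitSet_bit_sdiff_bitSet_bit (b b' : Bool) (m n : ℕ) :
    #(bitSet (bit b' n) \ bitSet (bit b m)) = (b' && !b).toNat + #(bitSet n \ bitSet m) := by
  rw [bitSet_bit_sdiff_bitSet_bit, card_union_of_disjoint, card_map]
  · split <;> simp_all
  · split <;> simp

theorem card_bitSet_bit (b : Bool) (n : ℕ) : #(bitSet (bit b n)) = b.toNat + #(bitSet n) := by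
  simpa [bit_false_zero] using card_bitSet_bit_sdiff_bitSet_bit false b 0 n

theorem sigma2_bit (b : Bool) (n : ℕ) : sigma2 (bit b n) = b.toNat + sigma2 n := by
  rcases eq_or_ne (bit b n) 0 with h | h
  · obtain ⟨rfl, rfl⟩ := bit_eq_zero_iff.1 h
    simp [sigma2]
  · rw [sigma2, digits_def' one_lt_two (pos_of_ne_zero h), bit_mod_two, bit_div_two,
      List.sum_cons, sigma2]

theorem sigma2_eq_card_bitSet (n : ℕ) : sigma2 n = #(bitSet n) := by
  induction n using binaryRec with
  | zero => simp [sigma2]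
  | bit b n ih => rw [sigma2_bit, card_bitSet_bit, ih]

theorem card_twoPows_inter (m n : ℕ) : #(twoPows n ∩ twoPows m) = #(bitSet n ∩ bitSet m) := by
  have hinj : Function.Injective (2 ^ · : ℕ → ℕ) := Nat.pow_right_injective le_rfl
  rw [twoPows, twoPows, ← image_inter _ _ hinj, card_image_of_injective _ hinj, bitSet, bitSet]

theorem card_bitSet_succ_sdiff_le (p : ℕ) : #(bitSet (p + 1) \ bitSet p) ≤ 1 := by
  induction p using binaryRec with
  | zero => simp [bitSet]
  | bit b a ih =>
    cases b
    · rw [show bit false a + 1 = bit true a by simp [bit_val], card_bitSet_bit_sdiff_bitSet_bit]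
      simp
    · rw [show bit true a + 1 = bit false (a + 1) by simp [bit_val]; ring,
        card_bitSet_bit_sdiff_bitSet_bit]
      simpa using ih

theorem card_bitSet_add_two_mul_sdiff (p k : ℕ) :
    #(bitSet (p + 2 * k) \ bitSet p) = #(bitSet (p / 2 + k) \ bitSet (p / 2)) := by
  obtain ⟨b, a, rfl⟩ : ∃ b a, p = bit b a :=
    ⟨_, _, (bit_testBit_zero_shiftRight_one p).symm⟩
  rw [show bit b a + 2 * k = bit b (a + k) by simp [bit_val]; ring, bit_div_two,
    card_bitSet_bit_sdiff_bitSet_bit]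
  simp

theorem card_bitSet_add_sdiff_le (m k : ℕ) : #(bitSet (m + k) \ bitSet m) ≤ #(bitSet k) := by
  induction k using binaryRec generalizing m with
  | zero => simp
  | bit b k ih =>
    have heven : #(bitSet (m + 2 * k) \ bitSet m) ≤ #(bitSet k) :=
      card_bitSet_add_two_mul_sdiff m k ▸ ih (m / 2)
    rw [card_bitSet_bit]
    cases b
    · simpa [bit_val] using heven
    · rw [show m + bit true k = m + 2 * k + 1 by simp [bit_val]; ring]
      calc #(bitSet (m + 2 * k + 1) \ bitSet m)
          ≤ #(bitSet (m + 2 * k + 1) \ bitSet (m + 2 * k))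
            + #(bitSet (m + 2 * k) \ bitSet m) := card_sdiff_le_card_sdiff_add_card_sdiff _ _ _
        _ ≤ true.toNat + #(bitSet k) := Nat.add_le_add (card_bitSet_succ_sdiff_le _) heven

theorem stmt_9_general (n k : ℕ) (hkn : k ≤ n) :
    (0 : ℤ) ≤ (sigma2 k : ℤ) - sigma2 n + (twoPows n ∩ twoPows (n - k)).card := by
  have hle := card_bitSet_add_sdiff_le (n - k) k
  rw [Nat.sub_add_cancel hkn] at hle
  have hsplit := card_sdiff_add_card_inter (bitSet n) (bitSet (n - k))
  rw [card_twoPows_inter, sigma2_eq_card_bitSet, sigma2_eq_card_bitSet]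
  omega

theorem stmt_9 (n k : ℕ) (hk : 1 ≤ k) (hkn : k ≤ n) :
    (0 : ℤ) ≤ (sigma2 k : ℤ) - sigma2 n + (twoPows n ∩ twoPows (n - k)).card :=
  stmt_9_general n k hkn
end

section
/- Let h, u, c be natural numbers with c ≥ 1 and 0 < u < 2^h. Then ν(S(c·2^h + u, 2^h)) ≥ h - 1 - ν(u). -/
section Derivation

variable {R A : Type*} [CommRing R] [CommRing A] [Algebra R A] (D : Derivation R A A)

theorem Derivation.dvd_map_of_mul_eq_one {f g c : A} (hfg : f * g = 1) (hf : c ∣ D f) :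
    c ∣ D g := by
  have hD : D g = -(g ^ 2 * D f) := by
    have h := congrArg D hfg
    rw [D.leibniz, D.map_one_eq_zero, smul_eq_mul, smul_eq_mul] at h
    linear_combination g * h - D g * hfg
  rw [hD]
  exact (dvd_mul_of_dvd_right hf _).neg_right

theorem Derivation.dvd_map_mul_of_dvd_sub {f g c : A} (hc : D c = 0) (hgf : c ∣ g - f)
    (hf : c ∣ 2 * D f) : c ∣ D (f * g) := by
  obtain ⟨r, hr⟩ := hgf
  rw [show g = f + c * r by linear_combination hr]
  have hD : D (f * (f + c * r)) = f * (2 * D f) + c * (f * D r + r * D f) := by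
    simp only [D.leibniz, map_add, smul_eq_mul, hc]
    ring
  rw [hD]
  exact dvd_add (dvd_mul_of_dvd_right hf f) (dvd_mul_right c _)

end Derivation

theorem padicValNat_mul_pow_add {p : ℕ} [Fact p.Prime] {u k : ℕ} (a : ℕ) (hu : u ≠ 0)
    (hk : padicValNat p u < k) : padicValNat p (a * p ^ k + u) = padicValNat p u := by
  have hne : a * p ^ k + u ≠ 0 := by omega
  have hdvd {j : ℕ} (hj : j ≤ k) : p ^ j ∣ a * p ^ k + u ↔ p ^ j ∣ u :=
    Nat.dvd_add_right (dvd_mul_of_dvd_right (pow_dvd_pow p hj) a)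
  apply le_antisymm
  · by_contra! hlt
    exact pow_succ_padicValNat_not_dvd hu ((hdvd hk).mp ((padicValNat_dvd_iff_le hne).mpr hlt))
  · exact (padicValNat_dvd_iff_le hne).mp ((hdvd hk.le).mpr pow_padicValNat_dvd)

open PowerSeries Finset Nat

theorem stirling2_eq_stirlingSecond : ∀ n k : ℕ, stirling2 n k = stirlingSecond n k
  | 0, 0 | 0, _ + 1 | _ + 1, 0 => rfl
  | n + 1, k + 1 => by
    rw [stirling2, stirlingSecond_succ_succ, stirling2_eq_stirlingSecond n (k + 1),
      stirling2_eq_stirlingSecond n k]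

theorem Nat.stirlingSecond_add_pos {k : ℕ} (hk : 0 < k) (n : ℕ) :
    0 < stirlingSecond (n + k) k := by
  obtain ⟨k, rfl⟩ := Nat.exists_eq_succ_of_ne_zero hk.ne'
  induction n with
  | zero => simp [stirlingSecond_self]
  | succ n ih =>
    rw [show n + 1 + (k + 1) = n + (k + 1) + 1 by ring, stirlingSecond_succ_succ]
    positivity

noncomputable def stirlingDenom (k : ℕ) : ℤ⟦X⟧ := ∏ i ∈ range k, (1 - C ((i : ℤ) + 1) * X)

noncomputable def stirlingSeries (k : ℕ) : ℤ⟦X⟧ := mk fun n => (stirlingSecond (n + k) k : ℤ)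

theorem stirlingSeries_zero : stirlingSeries 0 = 1 := by
  ext (_ | n) <;> simp [stirlingSeries, coeff_one]

theorem one_sub_mul_stirlingSeries_succ (k : ℕ) :
    (1 - C ((k : ℤ) + 1) * X) * stirlingSeries (k + 1) = stirlingSeries k := by
  ext (_ | n)
  · simp [stirlingSeries, stirlingSecond_self]
  · rw [sub_mul, one_mul, mul_assoc, map_sub, coeff_C_mul, coeff_succ_X_mul]
    simp only [stirlingSeries, coeff_mk]
    rw [show n + 1 + (k + 1) = n + k + 1 + 1 by ring, stirlingSecond_succ_succ,
      show n + (k + 1) = n + k + 1 by ring, show n + 1 + k = n + k + 1 by ring]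
    push_cast
    ring

theorem stirlingDenom_mul_stirlingSeries (k : ℕ) : stirlingDenom k * stirlingSeries k = 1 := by
  induction k with
  | zero => simp [stirlingDenom, stirlingSeries_zero]
  | succ k ih =>
    rw [stirlingDenom, prod_range_succ, mul_assoc, ← stirlingDenom,
      one_sub_mul_stirlingSeries_succ, ih]

theorem natCast_dvd_prod_shift_sub_stirlingDenom (m k : ℕ) :
    (m : ℤ⟦X⟧) ∣ ∏ i ∈ range k, (1 - C (((m + i : ℕ) : ℤ) + 1) * X) - stirlingDenom k := by
  rw [← Ideal.mem_span_singleton, ← SModEq.sub_mem, stirlingDenom]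
  refine SModEq.prod fun i _ => ?_
  rw [SModEq.sub_mem, Ideal.mem_span_singleton]
  exact ⟨-X, by simp only [Nat.cast_add, map_add, map_natCast]; ring⟩

theorem two_pow_dvd_derivative_stirlingDenom (h : ℕ) :
    (2 : ℤ⟦X⟧) ^ h ∣ d⁄dX ℤ (stirlingDenom (2 ^ (h + 1))) := by
  induction h with
  | zero => simp
  | succ h ih =>
    have hsplit : stirlingDenom (2 ^ (h + 2)) = stirlingDenom (2 ^ (h + 1)) *
        ∏ i ∈ range (2 ^ (h + 1)), (1 - C (((2 ^ (h + 1) + i : ℕ) : ℤ) + 1) * X) := by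
      rw [stirlingDenom, pow_succ, mul_two, prod_range_add]
      rfl
    have hc : (2 : ℤ⟦X⟧) ^ (h + 1) = ((2 ^ (h + 1) : ℕ) : ℤ⟦X⟧) := by push_cast; rfl
    rw [hsplit]
    apply (d⁄dX ℤ).dvd_map_mul_of_dvd_sub
    · rw [hc, Derivation.map_natCast]
    · rw [hc]
      exact natCast_dvd_prod_shift_sub_stirlingDenom _ _
    · rw [pow_succ' (2 : ℤ⟦X⟧)]
      exact mul_dvd_mul_left 2 ih

theorem two_pow_dvd_mul_stirlingSecond (h n : ℕ) :
    2 ^ h ∣ (n + 1) * stirlingSecond (n + 1 + 2 ^ (h + 1)) (2 ^ (h + 1)) := by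
  obtain ⟨r, hr⟩ := (d⁄dX ℤ).dvd_map_of_mul_eq_one (stirlingDenom_mul_stirlingSeries _)
    (two_pow_dvd_derivative_stirlingDenom h)
  have hcoeff := congrArg (coeff n) hr
  rw [coeff_derivative, stirlingSeries, coeff_mk, ← map_ofNat C, ← map_pow, coeff_C_mul] at hcoeff
  have hdvd : (2 : ℤ) ^ h ∣ ((n + 1) * stirlingSecond (n + 1 + 2 ^ (h + 1)) (2 ^ (h + 1)) : ℕ) :=
    ⟨coeff n r, by push_cast; linear_combination hcoeff⟩
  exact_mod_cast hdvd

theorem stmt_14 (h u c : ℕ) (hc : 1 ≤ c) (hu : 0 < u) (hu2 : u < 2 ^ h) :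
    (padicValNat 2 (stirling2 (c * 2 ^ h + u) (2 ^ h)) : ℤ) ≥ (h : ℤ) - 1 - padicValNat 2 u := by
  have hνu : padicValNat 2 u < h :=
    (padicValNat_le_nat_log u).trans_lt (Nat.log_lt_of_lt_pow hu.ne' hu2)
  obtain ⟨g, rfl⟩ : ∃ g, h = g + 1 := Nat.exists_eq_succ_of_ne_zero (by omega)
  obtain ⟨c', rfl⟩ := Nat.exists_eq_add_of_le' hc
  obtain ⟨n, hn⟩ : ∃ n, c' * 2 ^ (g + 1) + u = n + 1 := Nat.exists_eq_succ_of_ne_zero (by omega)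
  have hνn : padicValNat 2 (n + 1) = padicValNat 2 u := by
    rw [← hn, padicValNat_mul_pow_add _ hu.ne' hνu]
  have hS := stirlingSecond_add_pos (Nat.two_pow_pos (g + 1)) (n + 1)
  have hdvd := (padicValNat_dvd_iff_le (mul_ne_zero n.succ_ne_zero hS.ne')).mp
    (two_pow_dvd_mul_stirlingSecond g n)
  rw [padicValNat.mul n.succ_ne_zero hS.ne', hνn] at hdvd
  rw [show (c' + 1) * 2 ^ (g + 1) + u = n + 1 + 2 ^ (g + 1) by rw [add_one_mul]; omega,
    stirling2_eq_stirlingSecond]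
  omega
end

section
/- Let h, c be natural numbers with c ≥ 1. Then ν(S(c·2^h + 2^h, 2^h)) = 0, i.e., S((c+1)·2^h, 2^h) is odd. -/
/-!
Modulo 2 the recurrence `S(n+1, k+1) = (k+1) S(n, k+1) + S(n, k)` loses its first term when
`k + 1` is even and becomes Pascal's rule when `k + 1` is odd; this gives
`S(d+k+1, k+1) ≡ C(d + ⌊k/2⌋, ⌊k/2⌋) (mod 2)`. For `k + 1 = 2^h` and `d = c 2^h` the binomial
coefficient is `C(c 2^h + r, r)` with `r < 2^h`, which is odd by Lucas's theorem.
-/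

theorem stirling2_eq_stirlingSecond_s15 : stirling2 = Nat.stirlingSecond := by
  funext n k
  induction n generalizing k with
  | zero => cases k <;> rfl
  | succ n ih => cases k <;> simp [stirling2, Nat.stirlingSecond_succ_succ, ih]

namespace Nat

theorem stirlingSecond_add_succ_modEq_choose :
    ∀ d k : ℕ, stirlingSecond (d + k + 1) (k + 1) ≡ (d + k / 2).choose (k / 2) [MOD 2]
  | 0, k => by
    rw [zero_add, stirlingSecond_self, zero_add, choose_self]
  | d + 1, 0 => by
    simpa [stirlingSecond_succ_succ] using stirlingSecond_add_succ_modEq_choose d 0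
  | d + 1, k + 1 => by
    have ih₁ := stirlingSecond_add_succ_modEq_choose d (k + 1)
    have ih₂ := stirlingSecond_add_succ_modEq_choose (d + 1) k
    rw [show d + (k + 1) + 1 = d + 1 + k + 1 by omega] at ih₁
    rw [show d + 1 + (k + 1) + 1 = d + 1 + k + 1 + 1 by omega, stirlingSecond_succ_succ]
    rcases Nat.even_or_odd' k with ⟨m, rfl | rfl⟩
    · have h_even : 2 ∣ 2 * m + 1 + 1 := ⟨m + 1, by ring⟩
      rw [show (2 * m + 1) / 2 = m by omega]
      rw [show 2 * m / 2 = m by omega] at ih₂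
      calc _ ≡ 0 + stirlingSecond (d + 1 + 2 * m + 1) (2 * m + 1) [MOD 2] :=
            (modEq_zero_iff_dvd.2 (h_even.mul_right _)).add_right _
        _ ≡ _ [MOD 2] := by rw [zero_add]; exact ih₂
    · have h_odd : 2 * m + 1 + 1 + 1 ≡ 1 [MOD 2] := by
        rw [ModEq]; omega
      rw [show (2 * m + 1 + 1) / 2 = m + 1 by omega] at ih₁ ⊢
      rw [show (2 * m + 1) / 2 = m by omega] at ih₂
      calc _ ≡ 1 * (d + (m + 1)).choose (m + 1) + (d + 1 + m).choose m [MOD 2] :=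
            (h_odd.mul ih₁).add ih₂
        _ = (d + 1 + (m + 1)).choose (m + 1) := by
          rw [one_mul, add_comm, show d + 1 + (m + 1) = d + m + 1 + 1 by omega, choose_succ_succ,
            show d + 1 + m = d + m + 1 by omega, show d + (m + 1) = d + m + 1 by omega]
termination_by d k => d + k

end Nat

namespace Choose

theorem choose_mul_pow_add_modEq_one {p : ℕ} [Fact p.Prime] (a : ℕ) :
    ∀ {t r : ℕ}, r < p ^ t → (a * p ^ t + r).choose r ≡ 1 [MOD p]
  | 0, r, hr => by
    rw [pow_zero, Nat.lt_one_iff] at hr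
    rw [hr, Nat.choose_zero_right]
  | t + 1, r, hr => by
    have hp : 0 < p := (Fact.out : p.Prime).pos
    have hn : a * p ^ (t + 1) + r = p * (a * p ^ t) + r := by ring
    have hr' : r / p < p ^ t := Nat.div_lt_of_lt_mul (by rwa [← pow_succ'])
    calc (a * p ^ (t + 1) + r).choose r
        ≡ (r % p).choose (r % p) * (a * p ^ t + r / p).choose (r / p) [MOD p] := by
          have lucas := choose_modEq_choose_mod_mul_choose_div_nat (n := p * (a * p ^ t) + r)
            (k := r) (p := p)
          rwa [Nat.mul_add_mod, Nat.mul_add_div hp, ← hn] at lucas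
      _ ≡ 1 * 1 [MOD p] := by
          rw [Nat.choose_self]
          exact (Nat.ModEq.refl 1).mul (choose_mul_pow_add_modEq_one a hr')

end Choose

theorem stmt_15_general (h c : ℕ) :
    padicValNat 2 (stirling2 (c * 2 ^ h + 2 ^ h) (2 ^ h)) = 0 := by
  obtain ⟨k, hk⟩ : ∃ k, 2 ^ h = k + 1 := Nat.exists_eq_add_one.2 (Nat.two_pow_pos h)
  have h_odd : stirling2 (c * 2 ^ h + 2 ^ h) (2 ^ h) ≡ 1 [MOD 2] :=
    calc stirling2 (c * 2 ^ h + 2 ^ h) (2 ^ h)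
        = Nat.stirlingSecond (c * 2 ^ h + k + 1) (k + 1) := by
          rw [stirling2_eq_stirlingSecond_s15, add_assoc, ← hk]
      _ ≡ (c * 2 ^ h + k / 2).choose (k / 2) [MOD 2] :=
          Nat.stirlingSecond_add_succ_modEq_choose _ _
      _ ≡ 1 [MOD 2] := Choose.choose_mul_pow_add_modEq_one c (by omega)
  exact padicValNat.eq_zero_of_not_dvd (Nat.two_dvd_ne_zero.2 h_odd)

theorem stmt_15 (h c : ℕ) (hc : 1 ≤ c) :
    padicValNat 2 (stirling2 (c * 2 ^ h + 2 ^ h) (2 ^ h)) = 0 :=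
  stmt_15_general h c
end
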